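/- arXiv:2605.27307 — 2 statements merged into one kernel-verified Lean document; each statement's English description precedes it below -/
import Mathlib

section
/- Let G be a finite simple graph with a fixed total order on its vertex set, and let 𝒯 be a nonempty set of triangles (3-cliques) of G. Then the smallest positive eigenvalue of the restricted total edge Laplacian L₁ = δ₀ δ₀ᵀ + δ₁(𝒯)ᵀ δ₁(𝒯) equals the minimum of the smallest positive eigenvalue of the graph Laplacian L = δ₀ᵀ δ₀ and the smallest positive eigenvalue λ(𝒯) of δ₁(𝒯)ᵀ δ₁(𝒯). In particular, if G is connected, then the smallest positive eigenvalue of L₁ equals min{λ₂(L), λ(𝒯)}, where λ₂(L) is the second smallest eigenvalue of L. -/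
open Finset Matrix

/-- The sign `[T : e]` of an edge `e` in a triangle `T` (both given as finsets of
vertices of a linearly ordered type). -/
noncomputable def triSign {V : Type*} [LinearOrder V] (T e : Finset V) : ℝ :=
  if e ⊆ T ∧ e.card = 2 ∧ T.card = 3 then
    if (T \ e).max = T.max ∨ (T \ e).min = T.min then 1 else -1
  else 0

/-- The signed vertex-edge incidence matrix `δ₀` of a graph `G`: rows indexed by the
edges of `G` (as 2-cliques), columns by vertices; entry `+1` at the larger endpoint,
`-1` at the smaller endpoint, `0` otherwise. -/
noncomputable def d0 {V : Type*} [Fintype V] [LinearOrder V] (G : SimpleGraph V)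
    [DecidableRel G.Adj] : Matrix {e // e ∈ G.cliqueFinset 2} V ℝ :=
  Matrix.of fun e v => if v ∈ e.1 then (if ∀ w ∈ e.1, w ≤ v then 1 else -1) else 0

/-- The signed edge-triangle incidence matrix `δ₁(𝒯)` of a set `F` of triangles of
`G`: rows indexed by `F`, columns by the edges of `G`. -/
noncomputable def d1 {V : Type*} [Fintype V] [LinearOrder V] (G : SimpleGraph V)
    [DecidableRel G.Adj] (F : Finset (Finset V)) :
    Matrix {T // T ∈ F} {e // e ∈ G.cliqueFinset 2} ℝ :=
  Matrix.of fun T e => triSign T.1 e.1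

/-- The smallest positive eigenvalue of a matrix. -/
noncomputable def lambdaMinPos {m : Type*} [Fintype m] (M : Matrix m m ℝ) : ℝ :=
  sInf {μ : ℝ | 0 < μ ∧ ∃ v : m → ℝ, v ≠ 0 ∧ M.mulVec v = μ • v}

/-- The second smallest eigenvalue (counted with multiplicity) of a square real
matrix, read off from the sorted multiset of roots of its characteristic
polynomial. -/
noncomputable def secondSmallestEig {m : Type*} [Fintype m] [DecidableEq m]
    (M : Matrix m m ℝ) : ℝ :=
  (M.charpoly.roots.sort (· ≤ ·)).getD 1 0

/-!
Since `δ₁ δ₀ = 0`, the summands `P = δ₀ δ₀ᵀ` and `Q = δ₁ᵀ δ₁` of `L₁` satisfy `P Q = Q P = 0`.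
Hence for an eigenvector `v` of `P + Q` with eigenvalue `μ > 0`, whichever of `P v`, `Q v` is
nonzero is a `μ`-eigenvector of `P` resp. `Q`; conversely a `μ`-eigenvector of `P` is killed by
`Q` and vice versa. So the positive spectrum of `L₁` is the union of those of `P` and `Q`, and the
positive spectrum of `δ₀ δ₀ᵀ` is that of `δ₀ᵀ δ₀ = L` (apply `δ₀ᵀ` resp. `δ₀` to eigenvectors).
If `G` is connected, the kernel of `L` is spanned by the constant functions, so `0` is a simple
eigenvalue of the positive semidefinite `L` and `λ₂(L)` is its least positive eigenvalue.
-/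

theorem Multiset.isLeast_sort_getD_one {α : Type*} [LinearOrder α] {s : Multiset α} {a : α}
    (d : α) (ha : ∀ x ∈ s, a ≤ x) (hcount : s.count a = 1) (hcard : 2 ≤ Multiset.card s) :
    IsLeast {x | a < x ∧ x ∈ s} ((s.sort (· ≤ ·)).getD 1 d) := by
  have hsorted := s.pairwise_sort (· ≤ ·)
  have hmem : ∀ x, x ∈ s.sort (· ≤ ·) ↔ x ∈ s := fun x => s.mem_sort (· ≤ ·)
  have hcount' : (s.sort (· ≤ ·)).count a = 1 := by
    rw [← Multiset.coe_count, Multiset.sort_eq, hcount]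
  have hlen : 2 ≤ (s.sort (· ≤ ·)).length := by rwa [Multiset.length_sort]
  rcases hl : s.sort (· ≤ ·) with _ | ⟨x, _ | ⟨y, t⟩⟩
  all_goals simp only [hl, List.length_nil, List.length_cons] at hlen hmem hsorted hcount'
  · omega
  · omega
  simp only [List.pairwise_cons, List.mem_cons] at hsorted hmem
  have hx : x = a := by
    have ha_mem : a ∈ s := Multiset.count_pos.mp (by omega)
    rcases (hmem a).mpr ha_mem with rfl | rfl | hat
    · rfl
    · exact le_antisymm (hsorted.1 _ (.inl rfl)) (ha x ((hmem x).mp (.inl rfl)))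
    · exact le_antisymm (hsorted.1 _ (.inr hat)) (ha x ((hmem x).mp (.inl rfl)))
  subst hx
  have hy : x < y := by
    refine (ha y ((hmem y).mp (.inr (.inl rfl)))).lt_of_ne ?_
    rintro rfl
    simp at hcount'
  refine ⟨⟨hy, (hmem y).mp (.inr (.inl rfl))⟩, ?_⟩
  rintro z ⟨hxz, hz⟩
  rcases (hmem z).mpr hz with rfl | rfl | hzt
  · exact absurd hxz (lt_irrefl _)
  · exact le_rfl
  · exact hsorted.2.1 z hzt

namespace Matrix

variable {m n p : Type*} [Fintype m] [Fintype n] [Fintype p]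

def positiveEigenvalues (M : Matrix n n ℝ) : Set ℝ :=
  {μ : ℝ | 0 < μ ∧ ∃ v : n → ℝ, v ≠ 0 ∧ M *ᵥ v = μ • v}

theorem lambdaMinPos_eq_sInf (M : Matrix n n ℝ) :
    lambdaMinPos M = sInf M.positiveEigenvalues := rfl

theorem exists_mulVec_eq_smul_iff_mem_roots_charpoly [DecidableEq n] (M : Matrix n n ℝ) (μ : ℝ) :
    (∃ v : n → ℝ, v ≠ 0 ∧ M *ᵥ v = μ • v) ↔ μ ∈ M.charpoly.roots := by
  rw [Polynomial.mem_roots M.charpoly_monic.ne_zero, Polynomial.IsRoot, eval_charpoly,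
    ← exists_mulVec_eq_zero_iff]
  simp [sub_mulVec, sub_eq_zero, eq_comm]

theorem mem_positiveEigenvalues_iff [DecidableEq n] {M : Matrix n n ℝ} {μ : ℝ} :
    μ ∈ M.positiveEigenvalues ↔ 0 < μ ∧ μ ∈ M.charpoly.roots :=
  and_congr_right fun _ => M.exists_mulVec_eq_smul_iff_mem_roots_charpoly μ

theorem IsHermitian.mem_positiveEigenvalues_iff [DecidableEq n] {M : Matrix n n ℝ}
    (hM : M.IsHermitian) {μ : ℝ} :
    μ ∈ M.positiveEigenvalues ↔ 0 < μ ∧ ∃ i, hM.eigenvalues i = μ := by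
  simp [Matrix.mem_positiveEigenvalues_iff, hM.roots_charpoly_eq_eigenvalues]

theorem PosSemidef.positiveEigenvalues_nonempty {M : Matrix n n ℝ} (hM : M.PosSemidef)
    (h : M ≠ 0) : M.positiveEigenvalues.Nonempty := by
  classical
  obtain ⟨i, hi⟩ : ∃ i, hM.1.eigenvalues i ≠ 0 := by
    by_contra! h0
    exact h (hM.1.eigenvalues_eq_zero_iff.mp (funext h0))
  exact ⟨_, hM.1.mem_positiveEigenvalues_iff.mpr
    ⟨(hM.eigenvalues_nonneg i).lt_of_ne' hi, i, rfl⟩⟩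

theorem positiveEigenvalues_mul_comm (A : Matrix m n ℝ) (B : Matrix n m ℝ) :
    (A * B).positiveEigenvalues ⊆ (B * A).positiveEigenvalues := by
  rintro μ ⟨hμ, v, hv, hABv⟩
  refine ⟨hμ, B *ᵥ v, fun hBv => hv ?_, ?_⟩
  · simpa [← mulVec_mulVec, hBv, hμ.ne'] using hABv.symm
  · rw [mulVec_mulVec, Matrix.mul_assoc, ← mulVec_mulVec, hABv, mulVec_smul]

theorem positiveEigenvalues_transpose_mul_self (A : Matrix m n ℝ) :
    (Aᵀ * A).positiveEigenvalues = (A * Aᵀ).positiveEigenvalues :=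
  (positiveEigenvalues_mul_comm _ _).antisymm (positiveEigenvalues_mul_comm _ _)

theorem positiveEigenvalues_add_of_mul_eq_zero {P Q : Matrix n n ℝ} (hPQ : P * Q = 0)
    (hQP : Q * P = 0) :
    (P + Q).positiveEigenvalues = P.positiveEigenvalues ∪ Q.positiveEigenvalues := by
  have hkill : ∀ {A B : Matrix n n ℝ}, A * B = 0 → ∀ {μ : ℝ} {v : n → ℝ}, 0 < μ →
      B *ᵥ v = μ • v → A *ᵥ v = 0 := by
    intro A B hAB μ v hμ hBv
    have : μ • (A *ᵥ v) = 0 := by rw [← mulVec_smul, ← hBv, mulVec_mulVec, hAB, zero_mulVec]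
    exact (smul_eq_zero.mp this).resolve_left hμ.ne'
  ext μ
  constructor
  · rintro ⟨hμ, v, hv, hPQv⟩
    have hproj : ∀ {A : Matrix n n ℝ}, A * (P + Q) = A * A → A *ᵥ (A *ᵥ v) = μ • (A *ᵥ v) := by
      intro A hA
      rw [mulVec_mulVec, ← hA, ← mulVec_mulVec, hPQv, mulVec_smul]
    by_cases hPv : P *ᵥ v = 0
    · refine Or.inr ⟨hμ, Q *ᵥ v, fun hQv => hv ?_, hproj (by rw [Matrix.mul_add, hQP, zero_add])⟩
      simpa [add_mulVec, hPv, hQv, hμ.ne'] using hPQv.symm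
    · exact Or.inl ⟨hμ, P *ᵥ v, hPv, hproj (by rw [Matrix.mul_add, hPQ, add_zero])⟩
  · rintro (⟨hμ, v, hv, hPv⟩ | ⟨hμ, v, hv, hQv⟩)
    · exact ⟨hμ, v, hv, by rw [add_mulVec, hPv, hkill hQP hμ hPv, add_zero]⟩
    · exact ⟨hμ, v, hv, by rw [add_mulVec, hQv, hkill hPQ hμ hQv, zero_add]⟩

theorem lambdaMinPos_add_of_mul_eq_zero {P Q : Matrix n n ℝ} (hP : P.PosSemidef)
    (hQ : Q.PosSemidef) (hP0 : P ≠ 0) (hQ0 : Q ≠ 0) (hPQ : P * Q = 0) (hQP : Q * P = 0) :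
    lambdaMinPos (P + Q) = min (lambdaMinPos P) (lambdaMinPos Q) := by
  have hbdd : ∀ M : Matrix n n ℝ, BddBelow M.positiveEigenvalues := fun _ => ⟨0, fun _ h => h.1.le⟩
  simp only [lambdaMinPos_eq_sInf]
  rw [positiveEigenvalues_add_of_mul_eq_zero hPQ hQP,
    csInf_union (hbdd P) (hP.positiveEigenvalues_nonempty hP0) (hbdd Q)
      (hQ.positiveEigenvalues_nonempty hQ0)]

theorem posSemidef_transpose_mul_self (A : Matrix m n ℝ) : (Aᵀ * A).PosSemidef := by
  simpa using posSemidef_conjTranspose_mul_self A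

theorem lambdaMinPos_self_mul_transpose_add_transpose_mul {A : Matrix m n ℝ} {B : Matrix p m ℝ}
    (hBA : B * A = 0) (hA : A ≠ 0) (hB : B ≠ 0) :
    lambdaMinPos (A * Aᵀ + Bᵀ * B) = min (lambdaMinPos (Aᵀ * A)) (lambdaMinPos (Bᵀ * B)) := by
  have hAB : Aᵀ * Bᵀ = 0 := by rw [← transpose_mul, hBA, transpose_zero]
  have hP : (A * Aᵀ).PosSemidef := by simpa using posSemidef_self_mul_conjTranspose A
  have hP0 : A * Aᵀ ≠ 0 := by simpa using (self_mul_conjTranspose_eq_zero (A := A)).not.mpr hA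
  have hQ0 : Bᵀ * B ≠ 0 := by simpa using (conjTranspose_mul_self_eq_zero (A := B)).not.mpr hB
  rw [lambdaMinPos_add_of_mul_eq_zero hP (posSemidef_transpose_mul_self B) hP0 hQ0
      (by rw [Matrix.mul_assoc, ← Matrix.mul_assoc Aᵀ, hAB, Matrix.zero_mul, Matrix.mul_zero])
      (by rw [Matrix.mul_assoc, ← Matrix.mul_assoc B, hBA, Matrix.zero_mul, Matrix.mul_zero]),
    lambdaMinPos_eq_sInf (Aᵀ * A), positiveEigenvalues_transpose_mul_self, lambdaMinPos_eq_sInf]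

theorem PosSemidef.lambdaMinPos_eq_secondSmallestEig [DecidableEq n] {M : Matrix n n ℝ}
    (hM : M.PosSemidef) (hker : Module.finrank ℝ (LinearMap.ker M.mulVecLin) = 1)
    (hcard : 2 ≤ Fintype.card n) :
    lambdaMinPos M = secondSmallestEig M := by
  have hroots : M.charpoly.roots = Finset.univ.val.map hM.1.eigenvalues := by
    simp [hM.1.roots_charpoly_eq_eigenvalues]
  have hzeros : #{i | hM.1.eigenvalues i = 0} = 1 := by
    have hnullity := LinearMap.finrank_range_add_finrank_ker M.mulVecLin
    rw [← Matrix.rank, hM.1.rank_eq_card_non_zero_eigs, hker,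
      Module.finrank_fintype_fun_eq_card] at hnullity
    have hsplit : Fintype.card {i // hM.1.eigenvalues i ≠ 0} =
        Fintype.card n - #{i | hM.1.eigenvalues i = 0} := by
      rw [← Fintype.card_subtype]; exact Fintype.card_subtype_compl _
    have hle : #{i | hM.1.eigenvalues i = 0} ≤ Fintype.card n := Finset.card_le_univ _
    omega
  have hleast := Multiset.isLeast_sort_getD_one 0 (s := M.charpoly.roots) (a := 0)
    (by simpa [hroots] using hM.eigenvalues_nonneg)
    (by rw [hroots, Multiset.count_map]; simp_rw [eq_comm (a := (0 : ℝ))]; exact hzeros)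
    (by simpa [hroots] using hcard)
  rw [lambdaMinPos, secondSmallestEig, ← hleast.csInf_eq]
  congr 1
  ext μ
  exact mem_positiveEigenvalues_iff

end Matrix

namespace Finset
variable {V : Type*} [LinearOrder V] {a b c : V}

theorem exists_lt_lt_eq_triple_of_card_eq_three {s : Finset V} (h : #s = 3) :
    ∃ a b c, a < b ∧ b < c ∧ s = {a, b, c} := by
  set f := s.orderEmbOfFin h
  refine ⟨f 0, f 1, f 2, f.strictMono (by decide), f.strictMono (by decide), ?_⟩
  ext x
  rw [← mem_coe, ← range_orderEmbOfFin s h]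
  simp only [Set.mem_range, Fin.exists_fin_succ, mem_insert, mem_singleton]
  simp [eq_comm, f]

theorem eq_pair_of_subset_triple (hab : a < b) (hbc : b < c) {e : Finset V}
    (hsub : e ⊆ {a, b, c}) (hcard : #e = 2) : e = {a, b} ∨ e = {a, c} ∨ e = {b, c} := by
  obtain ⟨x, y, hxy, rfl⟩ := card_eq_two.mp hcard
  have hx := hsub (mem_insert_self x {y})
  have hy := hsub (mem_insert_of_mem (mem_singleton_self y))
  simp only [mem_insert, mem_singleton] at hx hy
  rcases hx with rfl | rfl | rfl <;> rcases hy with rfl | rfl | rfl <;>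
    simp_all [pair_comm]

theorem pair_ne_pair_of_lt_of_lt (hab : a < b) (hbc : b < c) :
    ({a, b} : Finset V) ≠ {a, c} ∧ ({a, b} : Finset V) ≠ {b, c} ∧ ({a, c} : Finset V) ≠ {b, c} :=
  ⟨ne_of_mem_of_not_mem' (a := b) (by simp) (by simp [hab.ne', hbc.ne]),
    ne_of_mem_of_not_mem' (a := a) (by simp) (by simp [hab.ne, (hab.trans hbc).ne]),
    ne_of_mem_of_not_mem' (a := a) (by simp) (by simp [hab.ne, (hab.trans hbc).ne])⟩

end Finset

theorem triSign_triple {V : Type*} [LinearOrder V] {a b c : V} (hab : a < b) (hbc : b < c)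
    (e : Finset V) :
    triSign {a, b, c} e =
      (if e = {a, b} then 1 else 0) - (if e = {a, c} then 1 else 0) +
        (if e = {b, c} then 1 else 0) := by
  have hac := hab.trans hbc
  by_cases he : e ⊆ {a, b, c} ∧ #e = 2
  · have hcd : ({c} : Finset V) \ {a, b} = {c} :=
      sdiff_eq_self_of_disjoint (by simp [hac.ne', hbc.ne'])
    obtain ⟨hab_ac, hab_bc, hac_bc⟩ := pair_ne_pair_of_lt_of_lt hab hbc
    rcases eq_pair_of_subset_triple hab hbc he.1 he.2 with rfl | rfl | rfl <;>
      simp [triSign, hab.ne, hbc.ne, hac.ne, hab.ne', hac.ne', card_insert_of_notMem, max_insert,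
        insert_sdiff_of_mem, insert_sdiff_of_notMem, hbc.le, hac.le, hab.le, hcd, hab_ac, hab_bc,
        hac_bc, hab_ac.symm, hab_bc.symm, hac_bc.symm]
  · rw [triSign, if_neg (fun h => he ⟨h.1, h.2.1⟩)]
    have hpair : ∀ {x y : V}, x < y → x ∈ ({a, b, c} : Finset V) → y ∈ ({a, b, c} : Finset V) →
        e ≠ {x, y} := by
      rintro x y hxy hx hy rfl
      exact he ⟨insert_subset hx (singleton_subset_iff.mpr hy), card_pair hxy.ne⟩
    simp [hpair hab, hpair hac, hpair hbc]

theorem SimpleGraph.IsNClique.exists_lt_lt_eq_triple {V : Type*} [LinearOrder V]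
    {G : SimpleGraph V} {T : Finset V} (hT : G.IsNClique 3 T) :
    ∃ a b c, a < b ∧ b < c ∧ G.Adj a b ∧ G.Adj a c ∧ G.Adj b c ∧ T = {a, b, c} := by
  obtain ⟨a, b, c, hab, hbc, rfl⟩ := Finset.exists_lt_lt_eq_triple_of_card_eq_three hT.card_eq
  obtain ⟨hadj_ab, hadj_ac, hadj_bc⟩ := SimpleGraph.is3Clique_triple_iff.mp hT
  exact ⟨a, b, c, hab, hbc, hadj_ab, hadj_ac, hadj_bc, rfl⟩

namespace SimpleGraph
variable {V : Type*} [Fintype V] [LinearOrder V] (G : SimpleGraph V) [DecidableRel G.Adj]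

theorem pair_mem_cliqueFinset_two {a b : V} (h : G.Adj a b) :
    ({a, b} : Finset V) ∈ G.cliqueFinset 2 := by
  refine mem_cliqueFinset_iff.mpr ⟨?_, card_pair h.ne⟩
  rw [coe_pair]
  exact isClique_pair.mpr fun _ => h

theorem d0_apply_pair {a b : V} (hab : a < b) (he : {a, b} ∈ G.cliqueFinset 2) (v : V) :
    d0 G ⟨{a, b}, he⟩ v = (if v = b then 1 else 0) - (if v = a then 1 else 0) := by
  rcases eq_or_ne v b with rfl | hvb
  · simp [d0, hab.le, hab.ne']
  rcases eq_or_ne v a with rfl | hva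
  · simp [d0, hvb, hab]
  · simp [d0, hva, hvb]

theorem d0_mulVec_apply_pair {a b : V} (hab : a < b) (he : {a, b} ∈ G.cliqueFinset 2)
    (x : V → ℝ) : (d0 G *ᵥ x) ⟨{a, b}, he⟩ = x b - x a := by
  simp [mulVec, dotProduct, d0_apply_pair G hab he, sub_mul]

theorem exists_eq_pair_of_mem_cliqueFinset_two {e : Finset V} (he : e ∈ G.cliqueFinset 2) :
    ∃ a b, a < b ∧ G.Adj a b ∧ e = {a, b} := by
  obtain ⟨hclique, hcard⟩ := mem_cliqueFinset_iff.mp he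
  obtain ⟨x, y, hxy, rfl⟩ := card_eq_two.mp hcard
  have hadj : G.Adj x y := hclique (by simp) (by simp) hxy
  rcases hxy.lt_or_gt with hlt | hgt
  · exact ⟨x, y, hlt, hadj, rfl⟩
  · exact ⟨y, x, hgt, hadj.symm, pair_comm x y⟩

theorem d0_mulVec_eq_zero_iff {x : V → ℝ} :
    d0 G *ᵥ x = 0 ↔ ∀ i j, G.Adj i j → x i = x j := by
  constructor
  · intro hx i j hij
    rcases hij.ne.lt_or_gt with hlt | hgt
    · have := congrFun hx ⟨_, G.pair_mem_cliqueFinset_two hij⟩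
      rw [d0_mulVec_apply_pair G hlt] at this
      exact (sub_eq_zero.mp this).symm
    · have := congrFun hx ⟨_, G.pair_mem_cliqueFinset_two hij.symm⟩
      rw [d0_mulVec_apply_pair G hgt] at this
      exact sub_eq_zero.mp this
  · intro hx
    ext ⟨e, he⟩
    obtain ⟨a, b, hab, hadj, rfl⟩ := G.exists_eq_pair_of_mem_cliqueFinset_two he
    rw [d0_mulVec_apply_pair G hab, hx a b hadj, sub_self, Pi.zero_apply]

theorem ker_mulVecLin_d0 :
    LinearMap.ker (d0 G).mulVecLin = LinearMap.ker (G.lapMatrix ℝ).toLin' := by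
  ext x
  rw [LinearMap.mem_ker, LinearMap.mem_ker, mulVecLin_apply, toLin'_apply,
    d0_mulVec_eq_zero_iff, lapMatrix_mulVec_eq_zero_iff_forall_adj]

theorem finrank_ker_transpose_mul_d0 (hG : G.Connected) :
    Module.finrank ℝ (LinearMap.ker ((d0 G)ᵀ * d0 G).mulVecLin) = 1 := by
  have := hG.preconnected.subsingleton_connectedComponent
  have := hG.nonempty
  rw [ker_mulVecLin_transpose_mul_self, ker_mulVecLin_d0,
    ← card_connectedComponent_eq_finrank_ker_toLin'_lapMatrix]
  exact le_antisymm (Fintype.card_le_one_iff_subsingleton.mpr ‹_›) Fintype.card_pos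

theorem d1_mulVec_apply_triple (F : Finset (Finset V)) {a b c : V} (hab : a < b) (hbc : b < c)
    (hT : {a, b, c} ∈ F) (hab' : {a, b} ∈ G.cliqueFinset 2) (hac' : {a, c} ∈ G.cliqueFinset 2)
    (hbc' : {b, c} ∈ G.cliqueFinset 2) (y : {e // e ∈ G.cliqueFinset 2} → ℝ) :
    (d1 G F *ᵥ y) ⟨{a, b, c}, hT⟩ = y ⟨_, hab'⟩ - y ⟨_, hac'⟩ + y ⟨_, hbc'⟩ := by
  have hpick : ∀ s (hs : s ∈ G.cliqueFinset 2),
      ∑ e : {e // e ∈ G.cliqueFinset 2}, (if e.1 = s then y e else 0) = y ⟨s, hs⟩ := by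
    intro s hs
    simp_rw [show ∀ e : {e // e ∈ G.cliqueFinset 2}, e.1 = s ↔ e = ⟨s, hs⟩ from
      fun e => (Subtype.ext_iff (a2 := ⟨s, hs⟩)).symm, Fintype.sum_ite_eq']
  simp only [mulVec, dotProduct, d1, of_apply, triSign_triple hab hbc, add_mul, sub_mul,
    sum_add_distrib, sum_sub_distrib, ite_mul, one_mul, zero_mul, hpick _ hab', hpick _ hac',
    hpick _ hbc']

theorem d1_mul_d0 {F : Finset (Finset V)} (hF : ∀ T ∈ F, G.IsNClique 3 T) :
    d1 G F * d0 G = 0 := by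
  refine ext_iff_mulVec.mpr fun x => funext fun ⟨T, hT⟩ => ?_
  obtain ⟨a, b, c, hab, hbc, hadj_ab, hadj_ac, hadj_bc, rfl⟩ := (hF T hT).exists_lt_lt_eq_triple
  rw [← mulVec_mulVec, d1_mulVec_apply_triple G F hab hbc hT (G.pair_mem_cliqueFinset_two hadj_ab)
    (G.pair_mem_cliqueFinset_two hadj_ac) (G.pair_mem_cliqueFinset_two hadj_bc),
    d0_mulVec_apply_pair G hab, d0_mulVec_apply_pair G (hab.trans hbc), d0_mulVec_apply_pair G hbc,
    zero_mulVec, Pi.zero_apply]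
  ring

theorem d0_ne_zero {i j : V} (h : G.Adj i j) : d0 G ≠ 0 := by
  intro h0
  have := (G.d0_mulVec_eq_zero_iff (x := fun v => if v = i then 1 else 0)).mp
    (by rw [h0, zero_mulVec]) i j h
  simp [h.ne'] at this

theorem d1_ne_zero {F : Finset (Finset V)} {T : Finset V} (hT : T ∈ F) (hF : G.IsNClique 3 T) :
    d1 G F ≠ 0 := by
  obtain ⟨a, b, c, hab, hbc, hadj_ab, -, -, rfl⟩ := hF.exists_lt_lt_eq_triple
  obtain ⟨hab_ac, hab_bc, -⟩ := Finset.pair_ne_pair_of_lt_of_lt hab hbc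
  intro h0
  have := congrFun₂ h0 ⟨_, hT⟩ ⟨_, G.pair_mem_cliqueFinset_two hadj_ab⟩
  simp [d1, triSign_triple hab hbc, hab_ac, hab_bc] at this

end SimpleGraph

/-- For a finite simple graph `G` with linearly ordered vertex set and a nonempty set
`F` of triangles (3-cliques) of `G`, the smallest positive eigenvalue of the
restricted total edge Laplacian `L₁ = δ₀ δ₀ᵀ + δ₁(𝒯)ᵀ δ₁(𝒯)` equals
`min(λ_min⁺(δ₀ᵀ δ₀), λ(𝒯))`; and if `G` is connected, it equals
`min(λ₂(L), λ(𝒯))`. -/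
theorem stmt0 {V : Type*} [Fintype V] [LinearOrder V] (G : SimpleGraph V)
    [DecidableRel G.Adj] (F : Finset (Finset V)) (hne : F.Nonempty)
    (hF : ∀ T ∈ F, G.IsNClique 3 T) :
    lambdaMinPos (d0 G * (d0 G)ᵀ + (d1 G F)ᵀ * d1 G F) =
      min (lambdaMinPos ((d0 G)ᵀ * d0 G)) (lambdaMinPos ((d1 G F)ᵀ * d1 G F)) ∧
    (G.Connected →
      lambdaMinPos (d0 G * (d0 G)ᵀ + (d1 G F)ᵀ * d1 G F) =
        min (secondSmallestEig ((d0 G)ᵀ * d0 G)) (lambdaMinPos ((d1 G F)ᵀ * d1 G F))) := by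
  obtain ⟨T, hT⟩ := hne
  obtain ⟨a, b, c, hab, -, hadj, -, -, rfl⟩ := (hF T hT).exists_lt_lt_eq_triple
  have hsplit := lambdaMinPos_self_mul_transpose_add_transpose_mul (G.d1_mul_d0 hF)
    (G.d0_ne_zero hadj) (G.d1_ne_zero hT (hF _ hT))
  refine ⟨hsplit, fun hG => ?_⟩
  rw [hsplit, (posSemidef_transpose_mul_self (d0 G)).lambdaMinPos_eq_secondSmallestEig
    (G.finrank_ker_transpose_mul_d0 hG) (Fintype.one_lt_card_iff.mpr ⟨a, b, hab.ne⟩)]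
end

section
/- Let a ≥ 3 be an integer. For every integer N ≥ 3a·C(a,2) + 2a(a−1), there exist nonnegative integers x, y, z such that N = x·C(a,2) + y·C(a+1,2) + z·C(a+2,2). Consequently, for every integer N ≥ 2a³ + 2a² + 1, there exist positive integers x, y, z such that N = (C(a,3) + x·C(a,2)) + (C(a+1,3) + y·C(a+1,2)) + (C(a+2,3) + z·C(a+2,2)). -/
lemma two_mul_choose_two (n : ℕ) : 2 * n.choose 2 = n * (n - 1) := by
  induction n with
  | zero => simp
  | succ k ih =>
    rw [Nat.choose_succ_succ, Nat.choose_one_right, Nat.mul_add, ih]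
    cases k with
    | zero => simp
    | succ j =>
      simp only [Nat.succ_sub_one]
      ring

lemma six_mul_choose_three (n : ℕ) : 6 * n.choose 3 = n * (n - 1) * (n - 2) := by
  induction n with
  | zero => simp
  | succ k ih =>
    rw [Nat.choose_succ_succ, Nat.mul_add, ih]
    have h2 := two_mul_choose_two k
    cases k with
    | zero => simp
    | succ j =>
      cases j with
      | zero => simp [Nat.choose]
      | succ i =>
        show 6 * ((i+2).choose 2) + (i+2)*(i+1)*i = (i+3)*(i+2)*(i+1)
        simp only [Nat.succ_sub_one] at h2
        zify at h2 ⊢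
        linear_combination 3 * h2

/-- For `a ≥ 3`: every `N ≥ 3a·C(a,2) + 2a(a-1)` is a nonnegative integer combination
of `C(a,2)`, `C(a+1,2)`, `C(a+2,2)`; consequently every `N ≥ 2a³ + 2a² + 1` can be
written as `(C(a,3) + x·C(a,2)) + (C(a+1,3) + y·C(a+1,2)) + (C(a+2,3) + z·C(a+2,2))`
with `x, y, z` positive integers. -/
theorem stmt17 (a : ℕ) (ha : 3 ≤ a) :
    (∀ N : ℕ, 3 * a * a.choose 2 + 2 * a * (a - 1) ≤ N →
      ∃ x y z : ℕ,
        N = x * a.choose 2 + y * (a + 1).choose 2 + z * (a + 2).choose 2) ∧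
    (∀ N : ℕ, 2 * a ^ 3 + 2 * a ^ 2 + 1 ≤ N →
      ∃ x y z : ℕ, 0 < x ∧ 0 < y ∧ 0 < z ∧
        N = (a.choose 3 + x * a.choose 2) + ((a + 1).choose 3 + y * (a + 1).choose 2) +
          ((a + 2).choose 3 + z * (a + 2).choose 2)) := by
  obtain ⟨b, rfl⟩ : ∃ b, a = b + 3 := ⟨a - 3, by omega⟩
  have e1 : b + 3 - 1 = b + 2 := rfl
  set A := (b+3).choose 2 with hAdef
  have hA : 2 * A = (b+3) * (b+2) := by
    have := two_mul_choose_two (b+3); simpa using this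
  have hApos : 0 < A := Nat.choose_pos (by omega)
  have hB : (b+3+1).choose 2 = A + (b+3) := by
    have h : (b+3+1).choose 2 = (b+3).choose 1 + (b+3).choose 2 := Nat.choose_succ_succ (b+3) 1
    rw [Nat.choose_one_right] at h
    rw [h, Nat.add_comm]
  have hC : (b+3+2).choose 2 = A + (2*(b+3)+1) := by
    have h : (b+3+2).choose 2 = (b+3+1).choose 1 + (b+3+1).choose 2 := Nat.choose_succ_succ (b+3+1) 1
    rw [Nat.choose_one_right, hB] at h
    rw [h]; ring
  have part1 : ∀ N : ℕ, 3 * (b+3) * (b+3).choose 2 + 2 * (b+3) * (b + 3 - 1) ≤ N →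
      ∃ x y z : ℕ,
        N = x * (b+3).choose 2 + y * (b+3+1).choose 2 + z * (b+3+2).choose 2 := by
    intro N hN
    rw [e1] at hN
    have hKN : 2*(b+3)*(b+2) ≤ N := le_trans (Nat.le_add_left _ _) hN
    obtain ⟨m, hm⟩ := Nat.exists_eq_add_of_le hKN
    have hm2 : 3*(b+3)*A ≤ m := by rw [hm] at hN; linarith
    set t := m / A with htdef
    set r := m % A with hrdef
    have hdm : A * t + r = m := Nat.div_add_mod m A
    have hrA : r < A := Nat.mod_lt m hApos
    set n := 2*(b+3)*(b+2) + r with hndef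
    have h1 : t * A + n = N := by rw [hm, ← hdm]; ring
    have h4 : 3*(b+3) ≤ t := (Nat.le_div_iff_mul_le hApos).mpr hm2
    have hb3 : 0 < b + 3 := by omega
    set q := n / (b+3) with hqdef
    set z := n % (b+3) with hzdef
    have hqa : (b+3) * q + z = n := Nat.div_add_mod n (b+3)
    have hz : z < b + 3 := Nat.mod_lt n hb3
    have hqge : 2*(b+2) ≤ q := by
      apply (Nat.le_div_iff_mul_le hb3).mpr
      calc 2*(b+2)*(b+3) = 2*(b+3)*(b+2) := by ring
        _ ≤ n := Nat.le_add_right _ _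
    have hn3 : n ≤ 3*(b+3)*(b+3) := by nlinarith [hrA, hA, hndef]
    have hq3 : q ≤ 3*(b+3) := by
      have h5 : q * (b+3) ≤ n := Nat.div_mul_le_self n (b+3)
      exact Nat.le_of_mul_le_mul_right (le_trans h5 hn3) hb3
    have h2z : 2 * z ≤ q := le_trans (by omega : 2*z ≤ 2*(b+2)) hqge
    obtain ⟨y, hy⟩ := Nat.exists_eq_add_of_le h2z
    have hyz : y + z ≤ t := by omega
    obtain ⟨x, hx⟩ := Nat.exists_eq_add_of_le hyz
    refine ⟨x, y, z, ?_⟩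
    rw [hB, hC, ← h1, hx, ← hqa, hy]
    ring
  refine ⟨part1, ?_⟩
  intro N hN
  have hD : 6 * (b+3).choose 3 = (b+3)*(b+2)*(b+1) := by
    have := six_mul_choose_three (b+3); simpa using this
  set D := (b+3).choose 3 with hDdef
  have hB3 : (b+3+1).choose 3 = A + D := Nat.choose_succ_succ (b+3) 2
  have hC3 : (b+3+2).choose 3 = (A + (b+3)) + (A + D) := by
    have h : (b+3+2).choose 3 = (b+3+1).choose 2 + (b+3+1).choose 3 := Nat.choose_succ_succ (b+3+1) 2
    rw [hB, hB3] at h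
    exact h
  have key : (D + (b+3+1).choose 3 + (b+3+2).choose 3)
      + (A + (b+3+1).choose 2 + (b+3+2).choose 2)
      + (3*(b+3)*A + 2*(b+3)*(b+2)) = 2*(b+3)^3 + 2*(b+3)^2 + 1 := by
    rw [hB, hC, hB3, hC3]
    have h6 : ∀ u v : ℕ, 6*u = 6*v → u = v := fun u v h => by omega
    apply h6
    zify at hA hD ⊢
    linear_combination (9*((b:ℤ)+5)) * hA + 3 * hD
  have hsw : (D + (b+3+1).choose 3 + (b+3+2).choose 3)
      + (A + (b+3+1).choose 2 + (b+3+2).choose 2)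
      + (3*(b+3)*A + 2*(b+3)*(b+2)) ≤ N := key.le.trans hN
  have hsle : (D + (b+3+1).choose 3 + (b+3+2).choose 3)
      + (A + (b+3+1).choose 2 + (b+3+2).choose 2) ≤ N :=
    le_trans (Nat.le_add_right _ _) hsw
  obtain ⟨M, hM⟩ := Nat.exists_eq_add_of_le hsle
  have hMge : 3*(b+3)*A + 2*(b+3)*(b+2) ≤ M := by
    rw [hM] at hsw
    exact le_of_add_le_add_left hsw
  obtain ⟨x', y', z', hxyz⟩ := part1 M hMge
  refine ⟨x'+1, y'+1, z'+1, by omega, by omega, by omega, ?_⟩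
  rw [hM, hxyz]
  ring
end
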